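/- Let H₁, H₂, H₃ be subgroups of a group G, let X₁ be a bifree H₂-H₁ conjugation biset and X₂ a bifree H₃-H₂ conjugation biset. Then the balanced product X₂ ×_{H₂} X₁ is a conjugation biset: for every point y ∈ X₂ ×_{H₂} X₁ there exists g ∈ G with g⁻¹·L_y·g = K_y and γ_y = c_g. -/
import Mathlib


/-- A biset: a set `X` with a left `H₂`-action and a right `H₁`-action that commute. -/
structure BisetAction (H₂ H₁ X : Type*) [Group H₂] [Group H₁] where
  l : H₂ → X → X
  r : X → H₁ → X
  l_one : ∀ x, l 1 x = x
  l_mul : ∀ a b x, l (a * b) x = l a (l b x)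
  r_one : ∀ x, r x 1 = x
  r_mul : ∀ x a b, r x (a * b) = r (r x a) b
  comm : ∀ a x b, r (l a x) b = l a (r x b)

namespace BisetAction

variable {H₂ H₁ X : Type*} [Group H₂] [Group H₁]

/-- Both actions are free. -/
def Bifree (B : BisetAction H₂ H₁ X) : Prop :=
  (∀ (a : H₂) (x : X), B.l a x = x → a = 1) ∧
  (∀ (x : X) (b : H₁), B.r x b = x → b = 1)

/-- Indecomposable: transitive as a combined `(H₂, H₁)`-set. -/
def Indecomposable (B : BisetAction H₂ H₁ X) : Prop :=
  ∀ x y : X, ∃ (a : H₂) (b : H₁), y = B.r (B.l a x) b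

/-- The subset `L_x = {h₂ ∈ H₂ | ∃ h₁, h₂·x = x·h₁}` of `H₂`. -/
def Lset (B : BisetAction H₂ H₁ X) (x : X) : Set H₂ :=
  {h₂ | ∃ h₁ : H₁, B.l h₂ x = B.r x h₁}

/-- The subset `K_x = {h₁ ∈ H₁ | ∃ h₂, h₂·x = x·h₁}` of `H₁`. -/
def Rset (B : BisetAction H₂ H₁ X) (x : X) : Set H₁ :=
  {h₁ | ∃ h₂ : H₂, B.l h₂ x = B.r x h₁}

end BisetAction

/-- The relation on `X₂ × X₁` whose quotient is the balanced product `X₂ ×_{H₂} X₁`;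
it identifies `(x₂·h, x₁)` with `(x₂, h·x₁)` for `h ∈ H₂`. -/
def bpRel {H₃ H₂ H₁ X₂ X₁ : Type*} [Group H₃] [Group H₂] [Group H₁]
    (B₂ : BisetAction H₃ H₂ X₂) (B₁ : BisetAction H₂ H₁ X₁) :
    X₂ × X₁ → X₂ × X₁ → Prop :=
  fun p q => ∃ h : H₂, p.1 = B₂.r q.1 h ∧ q.2 = B₁.l h p.2

/-- For subgroups `H₂, H₁ ≤ G`, the point `x` of a bifree `H₂`-`H₁` biset has
conjugation structure data witnessed by `g ∈ G` if `g⁻¹·L_x·g = K_x` and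
`γ_x = c_g` (i.e. whenever `h₂·x = x·h₁` one has `h₁ = g⁻¹·h₂·g` in `G`). -/
def BisetAction.ConjAt {G : Type*} [Group G] {H₂ H₁ : Subgroup G} {X : Type*}
    (B : BisetAction H₂ H₁ X) (x : X) (g : G) : Prop :=
  ((fun a : G => g⁻¹ * a * g) '' (Subtype.val '' B.Lset x) = Subtype.val '' B.Rset x) ∧
  (∀ (h₂ : H₂) (h₁ : H₁), B.l h₂ x = B.r x h₁ → (h₁ : G) = g⁻¹ * (h₂ : G) * g)

/-- A bifree biset for subgroups of `G` is a conjugation biset if at every point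
the structure isomorphism `γ_x : L_x → K_x` is given by conjugation by some `g ∈ G`. -/
def BisetAction.IsConjBiset {G : Type*} [Group G] {H₂ H₁ : Subgroup G} {X : Type*}
    (B : BisetAction H₂ H₁ X) : Prop :=
  ∀ x : X, ∃ g : G, B.ConjAt x g


private lemma bpRel_equivalence {H₃ H₂ H₁ X₂ X₁ : Type*} [Group H₃] [Group H₂] [Group H₁]
    (B₂ : BisetAction H₃ H₂ X₂) (B₁ : BisetAction H₂ H₁ X₁) :
    Equivalence (bpRel B₂ B₁) := by
  refine ⟨fun p => ⟨1, (B₂.r_one p.1).symm, (B₁.l_one p.2).symm⟩, ?_, ?_⟩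
  · rintro p q ⟨h, h1, h2⟩
    refine ⟨h⁻¹, ?_, ?_⟩
    · rw [h1, ← B₂.r_mul, mul_inv_cancel, B₂.r_one]
    · rw [h2, ← B₁.l_mul, inv_mul_cancel, B₁.l_one]
  · rintro p q s ⟨h, h1, h2⟩ ⟨k, k1, k2⟩
    refine ⟨k * h, ?_, ?_⟩
    · rw [h1, k1, B₂.r_mul]
    · rw [k2, h2, B₁.l_mul]

private lemma bpRel_of_eq {H₃ H₂ H₁ X₂ X₁ : Type*} [Group H₃] [Group H₂] [Group H₁]
    (B₂ : BisetAction H₃ H₂ X₂) (B₁ : BisetAction H₂ H₁ X₁) {p q : X₂ × X₁}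
    (h : Quot.mk (bpRel B₂ B₁) p = Quot.mk (bpRel B₂ B₁) q) :
    bpRel B₂ B₁ p q :=
  (bpRel_equivalence B₂ B₁).eqvGen_iff.mp (Quot.eqvGen_exact h)

/-- The balanced product of conjugation bisets is a conjugation biset. -/
theorem stmt_14 {G : Type*} [Group G] (H₁ H₂ H₃ : Subgroup G) {X₂ X₁ : Type*}
    (B₂ : BisetAction H₃ H₂ X₂) (B₁ : BisetAction H₂ H₁ X₁)
    (hB₂ : B₂.Bifree) (hB₁ : B₁.Bifree)
    (hc₂ : B₂.IsConjBiset) (hc₁ : B₁.IsConjBiset)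
    (BP : BisetAction H₃ H₁ (Quot (bpRel B₂ B₁)))
    (hBPl : ∀ (h₃ : H₃) (y₂ : X₂) (y₁ : X₁),
        BP.l h₃ (Quot.mk (bpRel B₂ B₁) (y₂, y₁)) =
          Quot.mk (bpRel B₂ B₁) (B₂.l h₃ y₂, y₁))
    (hBPr : ∀ (y₂ : X₂) (y₁ : X₁) (h₁ : H₁),
        BP.r (Quot.mk (bpRel B₂ B₁) (y₂, y₁)) h₁ =
          Quot.mk (bpRel B₂ B₁) (y₂, B₁.r y₁ h₁)) :
    BP.IsConjBiset := by
  intro y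
  induction y using Quot.ind with
  | _ p =>
  obtain ⟨y₂, y₁⟩ := p
  obtain ⟨g₂, hg₂set, hg₂⟩ := hc₂ y₂
  obtain ⟨g₁, hg₁set, hg₁⟩ := hc₁ y₁
  have key : ∀ (h₃ : H₃) (h₁ : H₁),
      BP.l h₃ (Quot.mk (bpRel B₂ B₁) (y₂, y₁)) = BP.r (Quot.mk (bpRel B₂ B₁) (y₂, y₁)) h₁ →
      (h₁ : G) = (g₂ * g₁)⁻¹ * (h₃ : G) * (g₂ * g₁) := by
    intro h₃ h₁ h
    rw [hBPl, hBPr] at h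
    obtain ⟨h₂, e1, e2⟩ := bpRel_of_eq B₂ B₁ h
    have c2 := hg₂ h₃ h₂ e1
    have c1 := hg₁ h₂ h₁ e2.symm
    rw [c1, c2]; group
  refine ⟨g₂ * g₁, ?_, fun h₃ h₁ h => key h₃ h₁ h⟩
  ext a
  constructor
  · rintro ⟨b, ⟨h₃, hh₃, rfl⟩, rfl⟩
    obtain ⟨h₁, hh₁⟩ := hh₃
    exact ⟨h₁, ⟨h₃, hh₁⟩, key h₃ h₁ hh₁⟩
  · rintro ⟨h₁, ⟨h₃, hh⟩, rfl⟩
    exact ⟨(h₃ : G), ⟨h₃, ⟨h₁, hh⟩, rfl⟩, (key h₃ h₁ hh).symm⟩
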